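/- arXiv:1101.4309 — 3 statements merged into one kernel-verified Lean document; each statement's English description precedes it below -/
import Mathlib

section
/- Cauchy Majorant Method in several variables: Let φ₁,…,φₙ be power series in n complex variables y = (y₁,…,yₙ), each convergent on a neighborhood of 0 ∈ ℂⁿ and of order ≥ 2 (no constant or linear terms), and let ζ₁,…,ζₙ be formal power series in y of order ≥ 2. If there exists δ > 0 such that δ·ζ̄ᵢ ≺ φ̄ᵢ(y₁ + ζ̄₁, …, yₙ + ζ̄ₙ) for every i = 1,…,n, then each formal series ζᵢ is convergent on some neighborhood of 0 ∈ ℂⁿ (has positive radius of convergence). -/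
open Filter Topology

noncomputable section

/-- The majorant of a multivariate formal power series: the series of the absolute
values (norms) of its coefficients. -/
def majorant {n : ℕ} (ξ : MvPowerSeries (Fin n) ℂ) : MvPowerSeries (Fin n) ℝ :=
  fun Q => ‖MvPowerSeries.coeff Q ξ‖

/-- The coefficient at `Q` of the substitution `φ(g 0, …, g (n-1))`, when each `g j` has
zero constant term: only multi-indices `P` with `|P| ≤ |Q|` (in particular `P` bounded
componentwise by `|Q|`) contribute to the coefficient of the composed series. -/
def substCoeff {n : ℕ} (φ : MvPowerSeries (Fin n) ℝ)
    (g : Fin n → MvPowerSeries (Fin n) ℝ) (Q : Fin n →₀ ℕ) : ℝ :=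
  ∑ P ∈ Finset.Icc (0 : Fin n →₀ ℕ)
      (Finsupp.equivFunOnFinite.symm fun _ : Fin n => Q.sum fun _ k => k),
    MvPowerSeries.coeff P φ * MvPowerSeries.coeff Q (∏ j : Fin n, g j ^ P j)

/-!
Put `W_N(f) = ∑_{|Q| < N} f_Q r^{|Q|}` for a series `f` with nonnegative coefficients. `W_N` is
submultiplicative, and it gains one degree on products of series without constant term:
`W_{N+1}(f g) ≤ W_N(f) W_N(g)`. Hence for the series `e_j = y_j + ζ̄_j` and `|P| ≥ 2`,
`W_{N+1}(e^P) ≤ x^{|P|}` whenever every `W_N(e_j) ≤ x`. Summing the majorant inequality over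
`|Q| ≤ N`, and using that the `φ_i` have order `≥ 2` and converge at a common radius `r₀`, gives
for `S_N = ∑_i W_N(ζ̄_i)` the recursion `δ S_{N+1} ≤ A ((r + S_N) / r₀)²`, where
`A = ∑_i φ̄_i(r₀, …, r₀)`. For `r` small this recursion keeps `S_N ≤ r` for all `N`, so every
`ζ̄_i` converges at `(r, …, r)`.
-/

namespace CauchyMajorant

open MvPowerSeries Finset

lemma exists_pos_forall_summable_mul_pow {ι α : Type*} [Finite ι] {a : ι → α → ℝ} {d : α → ℕ}
    (ha : ∀ i x, 0 ≤ a i x) (h : ∀ i, ∃ r : ℝ, 0 < r ∧ Summable fun x => a i x * r ^ d x) :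
    ∃ r : ℝ, 0 < r ∧ ∀ i, Summable fun x => a i x * r ^ d x := by
  have hev : ∀ i, ∀ᶠ r in 𝓝[>] (0 : ℝ), Summable fun x => a i x * r ^ d x := fun i => by
    obtain ⟨R, hR, hs⟩ := h i
    filter_upwards [Ioo_mem_nhdsGT hR] with r hr
    exact hs.of_nonneg_of_le (fun x => mul_nonneg (ha i x) (pow_nonneg hr.1.le _)) fun x =>
      mul_le_mul_of_nonneg_left (pow_le_pow_left₀ hr.1.le hr.2.le _) (ha i x)
  obtain ⟨r, hs, hr⟩ := ((eventually_all.mpr hev).and self_mem_nhdsWithin).exists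
  exact ⟨r, hr, hs⟩

lemma pow_le_pow_mul_div_sq {x R : ℝ} {k : ℕ} (hk : 2 ≤ k) (hx : 0 ≤ x) (hxR : x ≤ R)
    (hR : 0 < R) : x ^ k ≤ R ^ k * (x / R) ^ 2 := by
  obtain ⟨m, rfl⟩ := Nat.exists_eq_add_of_le' hk
  calc x ^ (m + 2) = x ^ m * x ^ 2 := pow_add x m 2
    _ ≤ R ^ m * x ^ 2 := by gcongr
    _ = R ^ (m + 2) * (x / R) ^ 2 := by field_simp; ring

lemma le_of_le_mul_add_sq {S : ℕ → ℝ} {c r : ℝ} (hc : 0 ≤ c) (hcr : 4 * c * r ≤ 1)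
    (hS : ∀ N, 0 ≤ S N) (h0 : S 0 ≤ r) (hstep : ∀ N, S N ≤ r → S (N + 1) ≤ c * (r + S N) ^ 2) :
    ∀ N, S N ≤ r
  | 0 => h0
  | N + 1 => by
    have ih := le_of_le_mul_add_sq hc hcr hS h0 hstep N
    have hr : 0 ≤ r := (hS 0).trans h0
    calc S (N + 1) ≤ c * (r + S N) ^ 2 := hstep N ih
      _ ≤ c * (2 * r) ^ 2 := by gcongr <;> linarith [hS N]
      _ = 4 * c * r * r := by ring
      _ ≤ r := mul_le_of_le_one_left hr hcr

section Nonneg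

variable (σ : Type*)

def nonnegCoeffs : Subsemiring (MvPowerSeries σ ℝ) where
  carrier := {f | ∀ Q, 0 ≤ coeff Q f}
  mul_mem' {f g} hf hg Q := by
    classical
    rw [coeff_mul]
    exact sum_nonneg fun p _ => mul_nonneg (hf p.1) (hg p.2)
  one_mem' Q := by
    classical
    rw [coeff_one]
    split_ifs <;> norm_num
  add_mem' {f g} hf hg Q := by
    rw [map_add]
    exact add_nonneg (hf Q) (hg Q)
  zero_mem' Q := by simp

variable {σ}

lemma X_mem_nonnegCoeffs (j : σ) : X j ∈ nonnegCoeffs σ := fun Q => by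
  classical
  rw [coeff_X]
  split_ifs <;> norm_num

end Nonneg

lemma majorant_mem_nonnegCoeffs {n : ℕ} (ξ : MvPowerSeries (Fin n) ℂ) :
    majorant ξ ∈ nonnegCoeffs (Fin n) :=
  fun Q => norm_nonneg (coeff Q ξ)

section TruncSum

variable {σ : Type*} [Finite σ]

def lowDegree (n : ℕ) : Finset (σ →₀ ℕ) := (Finsupp.finite_of_degree_lt n).toFinset

@[simp]
lemma mem_lowDegree {n : ℕ} {Q : σ →₀ ℕ} : Q ∈ lowDegree n ↔ Q.degree < n :=
  Set.Finite.mem_toFinset _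

def truncSum (n : ℕ) (r : ℝ) (f : MvPowerSeries σ ℝ) : ℝ :=
  ∑ Q ∈ lowDegree n, coeff Q f * r ^ Q.degree

variable {n : ℕ} {r : ℝ} {f g : MvPowerSeries σ ℝ}

@[simp]
lemma truncSum_zero : truncSum 0 r f = 0 := by
  simp [truncSum, lowDegree]

lemma truncSum_add : truncSum n r (f + g) = truncSum n r f + truncSum n r g := by
  simp only [truncSum, map_add, add_mul, sum_add_distrib]

lemma truncSum_nonneg (hf : f ∈ nonnegCoeffs σ) (hr : 0 ≤ r) : 0 ≤ truncSum n r f :=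
  sum_nonneg fun Q _ => mul_nonneg (hf Q) (pow_nonneg hr _)

lemma truncSum_one_le : truncSum n r (1 : MvPowerSeries σ ℝ) ≤ 1 := by
  classical
  simp only [truncSum, coeff_one, ite_mul, one_mul, zero_mul, sum_ite_eq', map_zero, pow_zero]
  split_ifs <;> norm_num

lemma truncSum_X_le (hr : 0 ≤ r) (j : σ) : truncSum n r (X j : MvPowerSeries σ ℝ) ≤ r := by
  classical
  simp only [truncSum, coeff_X, ite_mul, one_mul, zero_mul, sum_ite_eq', Finsupp.degree_single,
    pow_one]
  split_ifs <;> simp [hr]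

lemma truncSum_mul_le_of_degree_lt {a b : ℕ} (hf : f ∈ nonnegCoeffs σ) (hg : g ∈ nonnegCoeffs σ)
    (hr : 0 ≤ r) (h : ∀ p q : σ →₀ ℕ, (p + q).degree < n → coeff p f * coeff q g ≠ 0 →
      p.degree < a ∧ q.degree < b) :
    truncSum n r (f * g) ≤ truncSum a r f * truncSum b r g := by
  classical
  set F : (σ →₀ ℕ) × (σ →₀ ℕ) → ℝ := fun p =>
    coeff p.1 f * r ^ p.1.degree * (coeff p.2 g * r ^ p.2.degree)
  have hF : ∀ p, 0 ≤ F p := fun p =>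
    mul_nonneg (mul_nonneg (hf _) (pow_nonneg hr _)) (mul_nonneg (hg _) (pow_nonneg hr _))
  calc truncSum n r (f * g) = ∑ p ∈ (lowDegree n).biUnion antidiagonal, F p := by
        rw [sum_biUnion]
        · refine sum_congr rfl fun Q _ => ?_
          rw [coeff_mul, sum_mul]
          refine sum_congr rfl fun p hp => ?_
          rw [← mem_antidiagonal.mp hp, map_add, pow_add]
          ring
        · intro Q _ Q' _ hQQ'
          exact disjoint_left.mpr fun p hp hp' =>
            hQQ' ((mem_antidiagonal.mp hp).symm.trans (mem_antidiagonal.mp hp'))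
    _ ≤ ∑ p ∈ lowDegree a ×ˢ lowDegree b, F p := by
        rw [← sum_filter_ne_zero]
        refine sum_le_sum_of_subset_of_nonneg (fun p hp => ?_) fun p _ _ => hF p
        obtain ⟨hp, hFp⟩ := mem_filter.mp hp
        obtain ⟨Q, hQ, hpQ⟩ := mem_biUnion.mp hp
        rw [← mem_antidiagonal.mp hpQ] at hQ
        obtain ⟨hpa, hpb⟩ := h p.1 p.2 (mem_lowDegree.mp hQ) fun h0 => hFp (by
          simp only [F]; linear_combination (r ^ p.1.degree * r ^ p.2.degree) * h0)
        exact mem_product.mpr ⟨mem_lowDegree.mpr hpa, mem_lowDegree.mpr hpb⟩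
    _ = truncSum a r f * truncSum b r g := by rw [truncSum, truncSum, sum_mul_sum, sum_product]

lemma truncSum_mul_le (hf : f ∈ nonnegCoeffs σ) (hg : g ∈ nonnegCoeffs σ) (hr : 0 ≤ r) :
    truncSum n r (f * g) ≤ truncSum n r f * truncSum n r g :=
  truncSum_mul_le_of_degree_lt hf hg hr fun p q hpq _ => by
    rw [map_add] at hpq
    omega

lemma truncSum_succ_mul_le (hf : f ∈ nonnegCoeffs σ) (hg : g ∈ nonnegCoeffs σ) (hr : 0 ≤ r)
    (hf0 : constantCoeff f = 0) (hg0 : constantCoeff g = 0) :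
    truncSum (n + 1) r (f * g) ≤ truncSum n r f * truncSum n r g := by
  refine truncSum_mul_le_of_degree_lt hf hg hr fun p q hpq hfg => ?_
  have hp : p.degree ≠ 0 := by
    rw [ne_eq, Finsupp.degree_eq_zero_iff]; rintro rfl; simp [hf0] at hfg
  have hq : q.degree ≠ 0 := by
    rw [ne_eq, Finsupp.degree_eq_zero_iff]; rintro rfl; simp [hg0] at hfg
  rw [map_add] at hpq
  omega

lemma summable_of_truncSum_le {C : ℝ} (hf : f ∈ nonnegCoeffs σ) (hr : 0 ≤ r)
    (h : ∀ n, truncSum n r f ≤ C) : Summable fun Q => coeff Q f * r ^ Q.degree := by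
  refine summable_of_sum_le (c := C) (fun Q => mul_nonneg (hf Q) (pow_nonneg hr _)) fun u => ?_
  refine le_trans ?_ (h (u.sup Finsupp.degree + 1))
  refine sum_le_sum_of_subset_of_nonneg (fun Q hQ => ?_) fun Q _ _ =>
    mul_nonneg (hf Q) (pow_nonneg hr _)
  exact mem_lowDegree.mpr (Nat.lt_succ_of_le (le_sup hQ))

end TruncSum

section Products

variable {σ : Type*} [Fintype σ] {n : ℕ} {r : ℝ}

lemma truncSum_prod_le {ι : Type*} (s : Finset ι) {f : ι → MvPowerSeries σ ℝ}
    (hf : ∀ i ∈ s, f i ∈ nonnegCoeffs σ) (hr : 0 ≤ r) :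
    truncSum n r (∏ i ∈ s, f i) ≤ ∏ i ∈ s, truncSum n r (f i) := by
  classical
  induction s using Finset.induction_on with
  | empty => simpa using truncSum_one_le
  | insert a s ha ih =>
    have hfs : ∀ i ∈ s, f i ∈ nonnegCoeffs σ := fun i hi => hf i (mem_insert_of_mem hi)
    have hfa := hf a (mem_insert_self a s)
    rw [prod_insert ha, prod_insert ha]
    calc truncSum n r (f a * ∏ i ∈ s, f i)
        ≤ truncSum n r (f a) * truncSum n r (∏ i ∈ s, f i) :=
          truncSum_mul_le hfa (prod_mem hfs) hr
      _ ≤ truncSum n r (f a) * ∏ i ∈ s, truncSum n r (f i) :=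
          mul_le_mul_of_nonneg_left (ih hfs) (truncSum_nonneg hfa hr)

lemma truncSum_prod_pow_le {e : σ → MvPowerSeries σ ℝ} {x : ℝ}
    (he : ∀ j, e j ∈ nonnegCoeffs σ) (hr : 0 ≤ r) (hex : ∀ j, truncSum n r (e j) ≤ x)
    (P : σ →₀ ℕ) : truncSum n r (∏ j, e j ^ P j) ≤ x ^ P.degree := by
  calc truncSum n r (∏ j, e j ^ P j) ≤ ∏ j, truncSum n r (e j ^ P j) :=
        truncSum_prod_le _ (fun j _ => pow_mem (he j) _) hr
    _ ≤ ∏ j, x ^ P j := by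
        refine prod_le_prod (fun j _ => truncSum_nonneg (pow_mem (he j) _) hr) fun j _ => ?_
        calc truncSum n r (e j ^ P j) = truncSum n r (∏ _ ∈ range (P j), e j) := by
              rw [prod_const, card_range]
          _ ≤ ∏ _ ∈ range (P j), truncSum n r (e j) := truncSum_prod_le _ (fun _ _ => he j) hr
          _ ≤ x ^ P j := by
              rw [prod_const, card_range]
              exact pow_le_pow_left₀ (truncSum_nonneg (he j) hr) (hex j) _
    _ = x ^ P.degree := by rw [prod_pow_eq_pow_sum, Finsupp.degree_eq_sum]

lemma truncSum_succ_prod_pow_le {e : σ → MvPowerSeries σ ℝ} {x : ℝ}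
    (he : ∀ j, e j ∈ nonnegCoeffs σ) (he0 : ∀ j, constantCoeff (e j) = 0) (hr : 0 ≤ r)
    (hex : ∀ j, truncSum n r (e j) ≤ x) {P : σ →₀ ℕ} (hP : 2 ≤ P.degree) :
    truncSum (n + 1) r (∏ j, e j ^ P j) ≤ x ^ P.degree := by
  classical
  obtain ⟨j₀, hj₀⟩ := Finsupp.ne_iff.mp (show P ≠ 0 by rintro rfl; simp at hP)
  set P' := P - Finsupp.single j₀ 1
  have hP' : P = P' + Finsupp.single j₀ 1 :=
    (tsub_add_cancel_of_le (Finsupp.single_le_iff.mpr (Nat.one_le_iff_ne_zero.mpr hj₀))).symm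
  have hdeg : P'.degree + 1 = P.degree := by rw [hP', map_add, Finsupp.degree_single]
  obtain ⟨j₁, hj₁⟩ := Finsupp.ne_iff.mp (show P' ≠ 0 by intro h; rw [h, map_zero] at hdeg; omega)
  have hsplit : ∏ j, e j ^ P j = (∏ j, e j ^ P' j) * e j₀ := by
    conv_lhs => rw [hP']
    simp only [Finsupp.coe_add, Pi.add_apply, pow_add, prod_mul_distrib, Finsupp.single_apply,
      pow_ite, pow_one, pow_zero, prod_ite_eq, mem_univ, if_true]
  have h0 : constantCoeff (∏ j, e j ^ P' j) = 0 := by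
    rw [map_prod]
    exact prod_eq_zero (mem_univ j₁) (by rw [map_pow, he0, zero_pow hj₁])
  have hx : 0 ≤ x := (truncSum_nonneg (he j₀) hr).trans (hex j₀)
  calc truncSum (n + 1) r (∏ j, e j ^ P j)
      ≤ truncSum n r (∏ j, e j ^ P' j) * truncSum n r (e j₀) := by
        rw [hsplit]
        exact truncSum_succ_mul_le (prod_mem fun j _ => pow_mem (he j) _) (he j₀) hr h0 (he0 j₀)
    _ ≤ x ^ P'.degree * x :=
        mul_le_mul (truncSum_prod_pow_le he hr hex P') (hex j₀) (truncSum_nonneg (he j₀) hr)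
          (pow_nonneg hx _)
    _ = x ^ P.degree := by rw [← pow_succ, hdeg]

end Products

section Substitution

variable {n : ℕ} {φ : MvPowerSeries (Fin n) ℝ} {e : Fin n → MvPowerSeries (Fin n) ℝ} {r : ℝ}

@[simp]
lemma coeff_majorant (ξ : MvPowerSeries (Fin n) ℂ) (Q : Fin n →₀ ℕ) :
    coeff Q (majorant ξ) = ‖coeff Q ξ‖ :=
  rfl

lemma substCoeff_nonneg (hφ : φ ∈ nonnegCoeffs (Fin n)) (he : ∀ j, e j ∈ nonnegCoeffs (Fin n))
    (Q : Fin n →₀ ℕ) : 0 ≤ substCoeff φ e Q :=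
  sum_nonneg fun P _ => mul_nonneg (hφ P) (prod_mem (fun j _ => pow_mem (he j) _) Q)

lemma sum_substCoeff_mul_pow_le (hφ : φ ∈ nonnegCoeffs (Fin n))
    (he : ∀ j, e j ∈ nonnegCoeffs (Fin n)) (hr : 0 ≤ r) (N : ℕ) :
    ∑ Q ∈ lowDegree (N + 1), substCoeff φ e Q * r ^ Q.degree ≤
      ∑ P ∈ Icc 0 (Finsupp.equivFunOnFinite.symm fun _ => N),
        coeff P φ * truncSum (N + 1) r (∏ j, e j ^ P j) := by
  calc ∑ Q ∈ lowDegree (N + 1), substCoeff φ e Q * r ^ Q.degree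
      ≤ ∑ Q ∈ lowDegree (N + 1), ∑ P ∈ Icc 0 (Finsupp.equivFunOnFinite.symm fun _ => N),
          coeff P φ * coeff Q (∏ j, e j ^ P j) * r ^ Q.degree := by
        refine sum_le_sum fun Q hQ => ?_
        rw [← sum_mul]
        refine mul_le_mul_of_nonneg_right ?_ (pow_nonneg hr _)
        refine sum_le_sum_of_subset_of_nonneg (Icc_subset_Icc_right fun j => ?_) fun P _ _ =>
          mul_nonneg (hφ P) (prod_mem (fun j _ => pow_mem (he j) _) Q)
        -- `Q.sum fun _ k => k` in `substCoeff` is `Q.degree` by definition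
        exact Nat.le_of_lt_succ (mem_lowDegree.mp hQ)
    _ = _ := by
        rw [sum_comm]
        simp only [truncSum, mul_sum, mul_assoc]

lemma mul_truncSum_succ_le {ψ : MvPowerSeries (Fin n) ℝ} {δ r₀ x : ℝ} {N : ℕ}
    (hφ : φ ∈ nonnegCoeffs (Fin n)) (hφord : ∀ P, P.degree ≤ 1 → coeff P φ = 0)
    (he : ∀ j, e j ∈ nonnegCoeffs (Fin n)) (he0 : ∀ j, constantCoeff (e j) = 0)
    (hψ : ∀ Q, δ * coeff Q ψ ≤ |substCoeff φ e Q|) (hr : 0 ≤ r) (hr₀ : 0 < r₀)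
    (hsum : Summable fun P => coeff P φ * r₀ ^ P.degree)
    (hex : ∀ j, truncSum N r (e j) ≤ x) (hx : 0 ≤ x) (hxr₀ : x ≤ r₀) :
    δ * truncSum (N + 1) r ψ ≤ (∑' P, coeff P φ * r₀ ^ P.degree) * (x / r₀) ^ 2 := by
  have hterm : ∀ P, coeff P φ * truncSum (N + 1) r (∏ j, e j ^ P j) ≤
      coeff P φ * r₀ ^ P.degree * (x / r₀) ^ 2 := by
    intro P
    rcases le_or_gt P.degree 1 with hP | hP
    · simp [hφord P hP]
    · rw [mul_assoc]
      exact mul_le_mul_of_nonneg_left ((truncSum_succ_prod_pow_le he he0 hr hex hP).trans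
        (pow_le_pow_mul_div_sq hP hx hxr₀ hr₀)) (hφ P)
  calc δ * truncSum (N + 1) r ψ = ∑ Q ∈ lowDegree (N + 1), δ * coeff Q ψ * r ^ Q.degree := by
        simp only [truncSum, mul_sum, mul_assoc]
    _ ≤ ∑ Q ∈ lowDegree (N + 1), substCoeff φ e Q * r ^ Q.degree :=
        sum_le_sum fun Q _ => mul_le_mul_of_nonneg_right
          ((hψ Q).trans_eq (abs_of_nonneg (substCoeff_nonneg hφ he Q))) (pow_nonneg hr _)
    _ ≤ ∑ P ∈ Icc 0 (Finsupp.equivFunOnFinite.symm fun _ => N),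
          coeff P φ * truncSum (N + 1) r (∏ j, e j ^ P j) := sum_substCoeff_mul_pow_le hφ he hr N
    _ ≤ ∑ P ∈ Icc 0 (Finsupp.equivFunOnFinite.symm fun _ => N),
          coeff P φ * r₀ ^ P.degree * (x / r₀) ^ 2 := sum_le_sum fun P _ => hterm P
    _ ≤ (∑' P, coeff P φ * r₀ ^ P.degree) * (x / r₀) ^ 2 := by
        rw [← sum_mul]
        exact mul_le_mul_of_nonneg_right
          (hsum.sum_le_tsum _ fun P _ => mul_nonneg (hφ P) (pow_nonneg hr₀.le _)) (sq_nonneg _)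

end Substitution

section System

variable {n : ℕ} {φ ψ : Fin n → MvPowerSeries (Fin n) ℝ} {δ : ℝ}

lemma mul_sum_truncSum_succ_le {r r₀ : ℝ} {N : ℕ}
    (hφ : ∀ i, φ i ∈ nonnegCoeffs (Fin n)) (hφord : ∀ i P, P.degree ≤ 1 → coeff P (φ i) = 0)
    (hψ : ∀ i, ψ i ∈ nonnegCoeffs (Fin n)) (hψ0 : ∀ i, constantCoeff (ψ i) = 0)
    (hmaj : ∀ i Q, δ * coeff Q (ψ i) ≤ |substCoeff (φ i) (fun j => X j + ψ j) Q|)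
    (hr : 0 ≤ r) (hr₀ : 0 < r₀) (hsum : ∀ i, Summable fun P => coeff P (φ i) * r₀ ^ P.degree)
    (hN : r + ∑ i, truncSum N r (ψ i) ≤ r₀) :
    δ * ∑ i, truncSum (N + 1) r (ψ i) ≤
      (∑ i, ∑' P, coeff P (φ i) * r₀ ^ P.degree) * ((r + ∑ i, truncSum N r (ψ i)) / r₀) ^ 2 := by
  have hS : 0 ≤ ∑ i, truncSum N r (ψ i) := sum_nonneg fun i _ => truncSum_nonneg (hψ i) hr
  have hex : ∀ j, truncSum N r (X j + ψ j) ≤ r + ∑ i, truncSum N r (ψ i) := fun j => by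
    rw [truncSum_add]
    exact add_le_add (truncSum_X_le hr j)
      (single_le_sum (fun i _ => truncSum_nonneg (hψ i) hr) (mem_univ j))
  rw [mul_sum, sum_mul]
  exact sum_le_sum fun i _ => mul_truncSum_succ_le (hφ i) (hφord i)
    (fun j => add_mem (X_mem_nonnegCoeffs j) (hψ j))
    (fun j => by rw [map_add, constantCoeff_X, hψ0, zero_add]) (hmaj i) hr hr₀ (hsum i) hex
    (by linarith) hN

theorem exists_pos_summable_of_majorant_system
    (hφ : ∀ i, φ i ∈ nonnegCoeffs (Fin n)) (hφord : ∀ i P, P.degree ≤ 1 → coeff P (φ i) = 0)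
    (hψ : ∀ i, ψ i ∈ nonnegCoeffs (Fin n)) (hψ0 : ∀ i, constantCoeff (ψ i) = 0) (hδ : 0 < δ)
    (hmaj : ∀ i Q, δ * coeff Q (ψ i) ≤ |substCoeff (φ i) (fun j => X j + ψ j) Q|)
    (hconv : ∀ i, ∃ r : ℝ, 0 < r ∧ Summable fun P => coeff P (φ i) * r ^ P.degree) :
    ∃ r : ℝ, 0 < r ∧ ∀ i, Summable fun Q => coeff Q (ψ i) * r ^ Q.degree := by
  obtain ⟨r₀, hr₀, hsum⟩ := exists_pos_forall_summable_mul_pow (fun i P => hφ i P) hconv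
  set A := ∑ i, ∑' P, coeff P (φ i) * r₀ ^ P.degree
  set c := A / (δ * r₀ ^ 2)
  have hc : 0 ≤ c := div_nonneg (sum_nonneg fun i _ => tsum_nonneg fun P =>
    mul_nonneg (hφ i P) (pow_nonneg hr₀.le _)) (by positivity)
  set r := min (r₀ / 2) (1 / (4 * c + 1))
  have hr : 0 < r := by positivity
  have hcr : 4 * c * r ≤ 1 := calc
    4 * c * r ≤ (4 * c + 1) * (1 / (4 * c + 1)) :=
      mul_le_mul (by linarith) (min_le_right _ _) hr.le (by positivity)
    _ = 1 := by field_simp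
  set S : ℕ → ℝ := fun N => ∑ i, truncSum N r (ψ i)
  have hSnn : ∀ N, 0 ≤ S N := fun N => sum_nonneg fun i _ => truncSum_nonneg (hψ i) hr.le
  have hS : ∀ N, S N ≤ r := le_of_le_mul_add_sq hc hcr hSnn (by simp [S, hr.le]) fun N hN => by
    have hxr₀ : r + S N ≤ r₀ := by linarith [min_le_left (r₀ / 2) (1 / (4 * c + 1))]
    rw [← mul_le_mul_iff_of_pos_left hδ]
    calc δ * S (N + 1) ≤ A * ((r + S N) / r₀) ^ 2 :=
          mul_sum_truncSum_succ_le hφ hφord hψ hψ0 hmaj hr.le hr₀ hsum hxr₀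
      _ = δ * (c * (r + S N) ^ 2) := by simp only [c]; field_simp
  exact ⟨r, hr, fun i => summable_of_truncSum_le (hψ i) hr.le fun N =>
    (single_le_sum (fun i _ => truncSum_nonneg (hψ i) hr.le) (mem_univ i)).trans (hS N)⟩

end System

end CauchyMajorant

open CauchyMajorant MvPowerSeries

/-- **Cauchy Majorant Method in several variables.** Let `φ₁, …, φₙ` be convergent power
series in `n` variables of order `≥ 2` and `ζ₁, …, ζₙ` formal power series of order `≥ 2`.
If there is `δ > 0` with `δ·ζ̄ᵢ ≺ φ̄ᵢ(y₁ + ζ̄₁, …, yₙ + ζ̄ₙ)` for every `i`, then each `ζᵢ`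
is convergent on a neighborhood of `0 ∈ ℂⁿ` (has positive radius of convergence). -/
theorem cauchy_majorant_method {n : ℕ}
    (φ ζ : Fin n → MvPowerSeries (Fin n) ℂ)
    (hφconv : ∀ i, ∃ r : ℝ, 0 < r ∧
      Summable fun Q : Fin n →₀ ℕ =>
        ‖MvPowerSeries.coeff Q (φ i)‖ * r ^ (Q.sum fun _ k => k))
    (hφord : ∀ i (Q : Fin n →₀ ℕ), (Q.sum fun _ k => k) ≤ 1 →
      MvPowerSeries.coeff Q (φ i) = 0)
    (hζord : ∀ i (Q : Fin n →₀ ℕ), (Q.sum fun _ k => k) ≤ 1 →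
      MvPowerSeries.coeff Q (ζ i) = 0)
    (δ : ℝ) (hδ : 0 < δ)
    (hmaj : ∀ i (Q : Fin n →₀ ℕ),
      δ * ‖MvPowerSeries.coeff Q (ζ i)‖ ≤
        |substCoeff (majorant (φ i))
          (fun j => (MvPowerSeries.X j : MvPowerSeries (Fin n) ℝ) + majorant (ζ j)) Q|) :
    ∃ r : ℝ, 0 < r ∧ ∀ i,
      Summable fun Q : Fin n →₀ ℕ =>
        ‖MvPowerSeries.coeff Q (ζ i)‖ * r ^ (Q.sum fun _ k => k) :=
  exists_pos_summable_of_majorant_system (φ := fun i => majorant (φ i))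
    (ψ := fun i => majorant (ζ i)) (fun i => majorant_mem_nonnegCoeffs (φ i))
    (fun i P hP => by rw [coeff_majorant, hφord i P hP, norm_zero])
    (fun i => majorant_mem_nonnegCoeffs (ζ i))
    (fun i => by
      rw [← coeff_zero_eq_constantCoeff_apply, coeff_majorant, hζord i 0 (by simp), norm_zero])
    hδ hmaj hφconv

end
end

section
/- Linearizability criterion for germs with root-of-unity multiplier: Let h be holomorphic on a neighborhood of 0 ∈ ℂ with h(0) = 0 and h′(0) = λ, where λ is a primitive m-th root of unity. Then h is holomorphically linearizable — i.e. there exists an injective holomorphic map f on a neighborhood of 0 with f(0) = 0 such that f⁻¹(h(f(z))) = λ·z for all z near 0 — if and only if the m-th iterate satisfies h^{∘m}(z) = z for all z in some neighborhood of 0. -/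
/-!
If `h ∘ f = f ∘ (λ ·)` with `f` injective, then `h^[m] ∘ f = f ∘ (λ^m ·) = f`, and `f` is open at
`0` by the open mapping theorem, so `h^[m]` is the identity near `0`. Conversely, if `h^[m] = id`,
the twisted average `g = m⁻¹ ∑_{k < m} λ⁻ᵏ h^[k]` satisfies `g ∘ h = λ g` because `λ⁻¹ h` permutes
the summands cyclically, and `g′(0) = 1`; the local inverse of `g` linearizes `h`.
-/

open Filter Topology Finset

theorem Finset.sum_range_succ_eq_sum_range_of_eq {M : Type*} [AddCancelCommMonoid M]
    (a : ℕ → M) {m : ℕ} (ha : a m = a 0) :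
    ∑ k ∈ range m, a (k + 1) = ∑ k ∈ range m, a k := by
  have h := (sum_range_succ' a m).symm.trans (sum_range_succ a m)
  rw [ha] at h
  exact add_right_cancel h

theorem Filter.EventuallyEq.iterate_comp {α β : Type*} {L : Filter α} {h : β → β} {f : α → β}
    {T : α → α} (hT : Tendsto T L L) (hconj : h ∘ f =ᶠ[L] f ∘ T) (n : ℕ) :
    h^[n] ∘ f =ᶠ[L] f ∘ T^[n] := by
  induction n with
  | zero => rfl
  | succ n ih =>
    calc h^[n + 1] ∘ f = h^[n] ∘ (h ∘ f) := by rw [Function.iterate_succ]; rfl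
      _ =ᶠ[L] h^[n] ∘ (f ∘ T) := hconj.fun_comp _
      _ =ᶠ[L] f ∘ T^[n] ∘ T := ih.comp_tendsto hT
      _ = f ∘ T^[n + 1] := by rw [Function.iterate_succ]

theorem Filter.EventuallyEq.comp_localInverse {α β : Type*} {La : Filter α} {Lb : Filter β}
    {g : α → β} {r : β → α} {h : α → α} {T : β → β} (hr : Tendsto r Lb La)
    (hh : Tendsto h La La) (hleft : ∀ᶠ x in La, r (g x) = x) (hright : ∀ᶠ y in Lb, g (r y) = y)
    (hconj : g ∘ h =ᶠ[La] T ∘ g) : h ∘ r =ᶠ[Lb] r ∘ T := by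
  filter_upwards [hright, hr.eventually hconj, (hh.comp hr).eventually hleft] with y hy hgh hrg
  calc h (r y) = r (g (h (r y))) := hrg.symm
    _ = r (T (g (r y))) := congrArg r hgh
    _ = r (T y) := by rw [hy]

theorem AnalyticAt.nhds_le_map_nhds_of_injOn {E : Type*} [NormedAddCommGroup E]
    [NormedSpace ℂ E] [Nontrivial E] {f : E → ℂ} {z₀ : E} {V : Set E} (hf : AnalyticAt ℂ f z₀)
    (hV : V ∈ 𝓝 z₀) (hinj : Set.InjOn f V) : 𝓝 (f z₀) ≤ map f (𝓝 z₀) := by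
  refine hf.eventually_constant_or_nhds_le_map_nhds.resolve_left fun hconst => ?_
  obtain ⟨z, ⟨hzV, hfz⟩, hz⟩ :=
    ((((eventually_mem_set.mpr hV).and hconst).filter_mono nhdsWithin_le_nhds).and
      self_mem_nhdsWithin).exists (f := 𝓝[≠] z₀)
  exact hz (hinj hzV (mem_of_mem_nhds hV) hfz)

theorem iterate_eventuallyEq_id_of_semiconj {E : Type*} [NormedAddCommGroup E]
    [NormedSpace ℂ E] [Nontrivial E] {f : E → ℂ} {h : ℂ → ℂ} {T : E → E} {a : E} {V : Set E}
    {m : ℕ} (hf : AnalyticAt ℂ f a) (hV : V ∈ 𝓝 a) (hinj : Set.InjOn f V)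
    (hT : Tendsto T (𝓝 a) (𝓝 a)) (hTm : T^[m] = id) (hconj : h ∘ f =ᶠ[𝓝 a] f ∘ T) :
    ∀ᶠ y in 𝓝 (f a), h^[m] y = y :=
  hf.nhds_le_map_nhds_of_injOn hV hinj <| (hconj.iterate_comp hT m).mono fun x hx => by
    simpa [hTm] using hx

section TwistedAverage

variable {𝕜 : Type*} [NontriviallyNormedField 𝕜]

theorem AnalyticAt.iterate {f : 𝕜 → 𝕜} {x : 𝕜} (hf : AnalyticAt 𝕜 f x) (hx : f x = x) (n : ℕ) :
    AnalyticAt 𝕜 f^[n] x := by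
  induction n with
  | zero => exact analyticAt_id
  | succ n ih =>
    rw [Function.iterate_succ']
    exact AnalyticAt.comp (by rwa [Function.iterate_fixed hx]) ih

noncomputable def twistedAverage (h : 𝕜 → 𝕜) (l : 𝕜) (m : ℕ) (z : 𝕜) : 𝕜 :=
  (m : 𝕜)⁻¹ * ∑ k ∈ range m, l⁻¹ ^ k * h^[k] z

theorem twistedAverage_apply_eq_mul_of_iterate_eq_self {h : 𝕜 → 𝕜} {l z : 𝕜} {m : ℕ}
    (hl : l ^ m = 1) (hl0 : l ≠ 0) (hz : h^[m] z = z) : twistedAverage h l m (h z) = l * twistedAverage h l m z := by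
  have hshift : ∑ k ∈ range m, l⁻¹ ^ (k + 1) * h^[k + 1] z = ∑ k ∈ range m, l⁻¹ ^ k * h^[k] z :=
    sum_range_succ_eq_sum_range_of_eq (fun k => l⁻¹ ^ k * h^[k] z) (by simp [inv_pow, hl, hz])
  have hterm : ∀ k, l⁻¹ ^ k * h^[k] (h z) = l * (l⁻¹ ^ (k + 1) * h^[k + 1] z) := fun k => by
    rw [← Function.iterate_succ_apply, pow_succ]
    field_simp
  simp only [twistedAverage, hterm, ← mul_sum, hshift]
  ring

theorem twistedAverage_zero {h : 𝕜 → 𝕜} (h0 : h 0 = 0) (l : 𝕜) (m : ℕ) :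
    twistedAverage h l m 0 = 0 := by
  simp [twistedAverage, Function.iterate_fixed h0]

theorem analyticAt_twistedAverage {h : 𝕜 → 𝕜} {a : 𝕜} (hh : AnalyticAt 𝕜 h a) (ha : h a = a)
    (l : 𝕜) (m : ℕ) : AnalyticAt 𝕜 (twistedAverage h l m) a :=
  analyticAt_const.mul <| Finset.analyticAt_fun_sum _ fun k _ =>
    analyticAt_const.mul (hh.iterate ha k)

theorem hasDerivAt_twistedAverage {h : 𝕜 → 𝕜} {a l : 𝕜} {m : ℕ} (hh : HasDerivAt h l a)
    (ha : h a = a) (hl0 : l ≠ 0) (hm : (m : 𝕜) ≠ 0) : HasDerivAt (twistedAverage h l m) 1 a := by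
  have hterm : ∀ k ∈ range m, HasDerivAt (fun z => l⁻¹ ^ k * h^[k] z) 1 a := fun k _ => by
    simpa [inv_pow, inv_mul_cancel₀ (pow_ne_zero k hl0)] using
      (HasDerivAt.iterate a hh ha k).const_mul (l⁻¹ ^ k)
  unfold twistedAverage
  simpa [inv_mul_cancel₀ hm] using (HasDerivAt.fun_sum hterm).const_mul (m : 𝕜)⁻¹

end TwistedAverage

theorem exists_linearization_of_iterate_eq_id {𝕜 : Type*} [NontriviallyNormedField 𝕜]
    [CompleteSpace 𝕜] [CharZero 𝕜] {h : 𝕜 → 𝕜} {l : 𝕜} {m : ℕ} (hh : AnalyticAt 𝕜 h 0)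
    (hh0 : h 0 = 0) (hl : deriv h 0 = l) (hm : m ≠ 0) (hroot : l ^ m = 1)
    (hid : ∀ᶠ z in 𝓝 (0 : 𝕜), h^[m] z = z) :
    ∃ f : 𝕜 → 𝕜, AnalyticAt 𝕜 f 0 ∧ f 0 = 0 ∧
      ∃ V ∈ 𝓝 (0 : 𝕜), Set.InjOn f V ∧ ∀ z ∈ V, h (f z) = f (l * z) := by
  have hl0 : l ≠ 0 := by rintro rfl; simp [zero_pow hm] at hroot
  set g := twistedAverage h l m
  have hg : AnalyticAt 𝕜 g 0 := analyticAt_twistedAverage hh hh0 l m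
  have hg0 : g 0 = 0 := twistedAverage_zero hh0 l m
  have hh' : HasDerivAt h l 0 := hl ▸ hh.differentiableAt.hasDerivAt
  have hg' : deriv g 0 ≠ 0 := by
    rw [(hasDerivAt_twistedAverage hh' hh0 hl0 (Nat.cast_ne_zero.mpr hm)).deriv]
    exact one_ne_zero
  have hgh : g ∘ h =ᶠ[𝓝 0] (l * ·) ∘ g :=
    hid.mono fun z hz => twistedAverage_apply_eq_mul_of_iterate_eq_self hroot hl0 hz
  set r := hg.hasStrictDerivAt.localInverse g (deriv g 0) 0 hg'
  have hr : AnalyticAt 𝕜 r 0 := hg0 ▸ hg.analyticAt_localInverse hg'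
  have hr0 : r 0 = 0 := by
    have : r (g 0) = 0 := HasStrictFDerivAt.localInverse_apply_image ..
    rwa [hg0] at this
  have hright : ∀ᶠ y in 𝓝 0, g (r y) = y := by
    rw [← hg0]
    exact HasStrictDerivAt.eventually_right_inverse ..
  have hconj : h ∘ r =ᶠ[𝓝 0] r ∘ (l * ·) :=
    Filter.EventuallyEq.comp_localInverse (by simpa only [hr0] using hr.continuousAt.tendsto)
      (by simpa only [hh0] using hh.continuousAt.tendsto)
      (HasStrictDerivAt.eventually_left_inverse ..) hright hgh
  obtain ⟨V, hV, hVr⟩ := (hright.and hconj).exists_mem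
  exact ⟨r, hr, hr0, V, hV, Set.LeftInvOn.injOn fun y hy => (hVr y hy).1,
    fun z hz => (hVr z hz).2⟩

theorem linearizable_iff_iterate_eq_id_general
    (h : ℂ → ℂ) (hh : AnalyticAt ℂ h 0) (hh0 : h 0 = 0)
    (l : ℂ) (hl : deriv h 0 = l)
    (m : ℕ) (hm : 1 ≤ m) (hroot : l ^ m = 1) :
    (∃ f : ℂ → ℂ, AnalyticAt ℂ f 0 ∧ f 0 = 0 ∧
        ∃ V ∈ 𝓝 (0 : ℂ), Set.InjOn f V ∧ ∀ z ∈ V, h (f z) = f (l * z)) ↔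
      ∀ᶠ z in 𝓝 (0 : ℂ), h^[m] z = z := by
  refine ⟨fun ⟨f, hf, hf0, V, hV, hinj, hconj⟩ => ?_,
    exists_linearization_of_iterate_eq_id hh hh0 hl (Nat.one_le_iff_ne_zero.mp hm) hroot⟩
  have hrot : Tendsto (l * ·) (𝓝 (0 : ℂ)) (𝓝 0) := by
    simpa using (continuous_const_mul l).tendsto 0
  have hrotm : (l * ·)^[m] = id := by
    rw [mul_left_iterate, hroot]
    exact funext one_mul
  simpa [hf0] using
    iterate_eventuallyEq_id_of_semiconj hf hV hinj hrot hrotm (eventually_of_mem hV hconj)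

/-- **Linearizability criterion for germs with root-of-unity multiplier.** Let `h` be a
holomorphic germ at `0 ∈ ℂ` with `h(0) = 0` and `h′(0) = λ` a primitive `m`-th root of
unity. Then `h` is holomorphically linearizable (conjugate to `z ↦ λ z` by an injective
holomorphic germ fixing `0`) if and only if `h^[m]` is the identity near `0`. -/
theorem linearizable_iff_iterate_eq_id
    (h : ℂ → ℂ) (hh : AnalyticAt ℂ h 0) (hh0 : h 0 = 0)
    (l : ℂ) (hl : deriv h 0 = l)
    (m : ℕ) (hm : 1 ≤ m) (hroot : l ^ m = 1)
    (hprim : ∀ k : ℕ, 1 ≤ k → k < m → l ^ k ≠ 1) :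
    (∃ f : ℂ → ℂ, AnalyticAt ℂ f 0 ∧ f 0 = 0 ∧
        ∃ V ∈ 𝓝 (0 : ℂ), Set.InjOn f V ∧ ∀ z ∈ V, h (f z) = f (l * z)) ↔
      ∀ᶠ z in 𝓝 (0 : ℂ), h^[m] z = z :=
  linearizable_iff_iterate_eq_id_general h hh hh0 l hl m hm hroot
end

section
/- Exponential decay estimate for perturbed linear ODEs (Mattei-type estimate along spiral curves): Let μ ∈ ℂ with Re μ < 0, let T > 0, let a : [0,T] → ℂ be continuous with |a(t)| ≤ |Re μ| / (2|μ|) for all t ∈ [0,T], and let x : [0,T] → ℂ be differentiable with x′(t) = μ·x(t)·(1 + a(t)) for all t. Then |x(t)| ≤ |x(0)|·e^{(Re μ)·t/2} for all t ∈ [0,T]; in particular |x(t)| ≤ |x(0)| for all t. -/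
open Set

/-!
Multiplying by `e^{-μt}` removes the linear part: `y = e^{-μt} x` solves `y' = μ a y`, and the
bound on `a` gives `‖μ a‖ ≤ -Re μ / 2`. Grönwall's inequality then yields
`‖y t‖ ≤ ‖y 0‖ e^{-Re μ t / 2}`, i.e. `‖x t‖ ≤ ‖x 0‖ e^{Re μ t / 2}`.
-/

section

variable {E : Type*} [NormedAddCommGroup E] [NormedSpace ℂ E]

theorem norm_le_mul_exp_of_hasDerivWithinAt_smul {b : ℝ → ℂ} {y : ℝ → E} {K T : ℝ}
    (hy : ∀ t ∈ Icc 0 T, HasDerivWithinAt y (b t • y t) (Icc 0 T) t)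
    (hb : ∀ t ∈ Ico 0 T, ‖b t‖ ≤ K) :
    ∀ t ∈ Icc 0 T, ‖y t‖ ≤ ‖y 0‖ * Real.exp (K * t) := by
  intro t ht
  have := norm_le_gronwallBound_of_norm_deriv_right_le (fun s hs => (hy s hs).continuousWithinAt)
      (fun s hs => (hy s (Ico_subset_Icc_self hs)).mono_of_mem_nhdsWithin
        (Icc_mem_nhdsGE_of_mem hs)) le_rfl
      (fun s hs => by
        rw [norm_smul, add_zero]
        exact mul_le_mul_of_nonneg_right (hb s hs) (norm_nonneg _)) t ht
  rwa [gronwallBound_ε0, sub_zero] at this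

theorem HasDerivWithinAt.cexp_neg_mul_smul {x : ℝ → E} {v : E} {s : Set ℝ} {t : ℝ} (μ : ℂ)
    (hx : HasDerivWithinAt x (μ • x t + v) s t) :
    HasDerivWithinAt (fun t : ℝ => Complex.exp (-(μ * t)) • x t)
      (Complex.exp (-(μ * t)) • v) s t := by
  have he : HasDerivAt (fun t : ℝ => Complex.exp (-(μ * t))) (Complex.exp (-(μ * t)) * -μ) t :=
    ((Complex.ofRealCLM.hasDerivAt.const_mul μ).neg).cexp.congr_deriv (by simp)
  convert he.hasDerivWithinAt.smul hx using 1
  · rfl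
  rw [smul_add, smul_smul, mul_neg, neg_smul]
  abel

theorem norm_le_mul_exp_of_hasDerivWithinAt_add_smul {μ : ℂ} {c : ℝ → ℂ} {x : ℝ → E} {K T : ℝ}
    (hx : ∀ t ∈ Icc 0 T, HasDerivWithinAt x ((μ + c t) • x t) (Icc 0 T) t)
    (hc : ∀ t ∈ Ico 0 T, ‖c t‖ ≤ K) :
    ∀ t ∈ Icc 0 T, ‖x t‖ ≤ ‖x 0‖ * Real.exp ((μ.re + K) * t) := by
  set y : ℝ → E := fun t => Complex.exp (-(μ * t)) • x t
  have hy : ∀ t ∈ Icc 0 T, HasDerivWithinAt y (c t • y t) (Icc 0 T) t := fun t ht => by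
    simpa only [y, smul_comm (c t)] using
      ((hx t ht).congr_deriv (add_smul _ _ _)).cexp_neg_mul_smul μ
  have norm_y : ∀ t : ℝ, ‖y t‖ = Real.exp (-(μ.re * t)) * ‖x t‖ := fun t => by
    simp [y, norm_smul, Complex.norm_exp]
  intro t ht
  calc ‖x t‖ = Real.exp (μ.re * t) * ‖y t‖ := by
        rw [norm_y, ← mul_assoc, ← Real.exp_add, add_neg_cancel, Real.exp_zero, one_mul]
    _ ≤ Real.exp (μ.re * t) * (‖y 0‖ * Real.exp (K * t)) :=
        mul_le_mul_of_nonneg_left (norm_le_mul_exp_of_hasDerivWithinAt_smul hy hc t ht)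
          (Real.exp_pos _).le
    _ = ‖x 0‖ * Real.exp ((μ.re + K) * t) := by
        rw [norm_y, add_mul, Real.exp_add]; simp only [mul_zero, neg_zero, Real.exp_zero, one_mul]; ring

end

theorem perturbed_linear_ode_decay_general
    (μ : ℂ) (hμ : μ.re < 0) (T : ℝ)
    (a : ℝ → ℂ)
    (hab : ∀ t ∈ Icc (0 : ℝ) T, ‖a t‖ ≤ |μ.re| / (2 * ‖μ‖))
    (x : ℝ → ℂ)
    (hx : ∀ t ∈ Icc (0 : ℝ) T, HasDerivWithinAt x (μ * x t * (1 + a t)) (Icc 0 T) t) :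
    ∀ t ∈ Icc (0 : ℝ) T,
      ‖x t‖ ≤ ‖x 0‖ * Real.exp (μ.re * t / 2) ∧ ‖x t‖ ≤ ‖x 0‖ := by
  have hμ0 : 0 < ‖μ‖ := norm_pos_iff.mpr fun h => by simp [h] at hμ
  have hx' : ∀ t ∈ Icc 0 T, HasDerivWithinAt x ((μ + μ * a t) • x t) (Icc 0 T) t :=
    fun t ht => (hx t ht).congr_deriv (by rw [smul_eq_mul]; ring)
  have hc : ∀ t ∈ Ico 0 T, ‖μ * a t‖ ≤ -μ.re / 2 := fun t ht => by
    calc ‖μ * a t‖ = ‖μ‖ * ‖a t‖ := norm_mul _ _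
      _ ≤ ‖μ‖ * (|μ.re| / (2 * ‖μ‖)) := by gcongr; exact hab t (Ico_subset_Icc_self ht)
      _ = -μ.re / 2 := by rw [abs_of_neg hμ]; field_simp
  intro t ht
  have decay : ‖x t‖ ≤ ‖x 0‖ * Real.exp (μ.re * t / 2) := by
    convert norm_le_mul_exp_of_hasDerivWithinAt_add_smul hx' hc t ht using 3
    ring
  refine ⟨decay, decay.trans (mul_le_of_le_one_right (norm_nonneg _) ?_)⟩
  exact Real.exp_le_one_iff.mpr (by nlinarith [ht.1])

/-- **Exponential decay estimate for perturbed linear ODEs** (Mattei-type estimate along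
spiral curves). If `Re μ < 0`, `a` is continuous on `[0,T]` with
`‖a t‖ ≤ |Re μ| / (2‖μ‖)`, and `x` solves `x′(t) = μ x(t)(1 + a(t))` on `[0,T]`, then
`‖x(t)‖ ≤ ‖x(0)‖ e^{(Re μ) t / 2}`; in particular `‖x(t)‖ ≤ ‖x(0)‖`. -/
theorem perturbed_linear_ode_decay
    (μ : ℂ) (hμ : μ.re < 0) (T : ℝ) (hT : 0 < T)
    (a : ℝ → ℂ) (ha : ContinuousOn a (Icc 0 T))
    (hab : ∀ t ∈ Icc (0 : ℝ) T, ‖a t‖ ≤ |μ.re| / (2 * ‖μ‖))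
    (x : ℝ → ℂ)
    (hx : ∀ t ∈ Icc (0 : ℝ) T, HasDerivWithinAt x (μ * x t * (1 + a t)) (Icc 0 T) t) :
    ∀ t ∈ Icc (0 : ℝ) T,
      ‖x t‖ ≤ ‖x 0‖ * Real.exp (μ.re * t / 2) ∧ ‖x t‖ ≤ ‖x 0‖ :=
  perturbed_linear_ode_decay_general μ hμ T a hab x hx
end
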